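/- arXiv:2411.00191 — 3 statements merged into one kernel-verified Lean document; each statement's English description precedes it below -/
import Mathlib

section
/- Let μ be a probability measure on ℝ² whose marginals ν₁ (with CDF G) and ν₀ (with CDF F) have finite second moments. Then ∫_{ℝ²} x·y dμ(x,y) ≥ ∫₀¹ G⁻¹(u) F⁻¹(1 − u) du, where G⁻¹(u) = inf{y : G(y) ≥ u} and F⁻¹(u) = inf{y : F(y) ≥ u} are the quantile functions. That is, among all couplings of ν₁ and ν₀, the cross-moment E[Y₁Y₀] is bounded below by its value under the countermonotonic coupling (G⁻¹(U), F⁻¹(1−U)), U uniform on [0,1]. -/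
/-!
With `k x s = 1{0 ≤ s} - 1{x ≤ s}` one has `∫ k x s ds = x`, so `x * y = ∬ k x s * k y t ds dt`
and by Fubini the cross-moment of a coupling is `∬ E[k X s * k Y t] ds dt`. Expanding the
product, `E[k X s * k Y t]` is the joint CDF `H(s, t)` plus terms depending only on the
marginals, so among couplings with given marginals a pointwise smaller joint CDF gives a smaller
cross-moment. The countermonotonic coupling `(G⁻¹(U), F⁻¹(1 - U))` has joint CDF
`max (G s + F t - 1) 0`, the Fréchet lower bound valid for every coupling.
-/

open MeasureTheory Set

lemma MeasureTheory.Measure.fst_real_apply {α β : Type*} [MeasurableSpace α] [MeasurableSpace β]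
    {ρ : Measure (α × β)} {s : Set α} (hs : MeasurableSet s) :
    ρ.fst.real s = ρ.real (Prod.fst ⁻¹' s) :=
  map_measureReal_apply measurable_fst hs

lemma MeasureTheory.Measure.snd_real_apply {α β : Type*} [MeasurableSpace α] [MeasurableSpace β]
    {ρ : Measure (α × β)} {s : Set β} (hs : MeasurableSet s) :
    ρ.snd.real s = ρ.real (Prod.snd ⁻¹' s) :=
  map_measureReal_apply measurable_snd hs

lemma MeasureTheory.add_measureReal_sub_one_le_measureReal_inter {α : Type*} [MeasurableSpace α]
    {μ : Measure α} [IsProbabilityMeasure μ] {A B : Set α} (hB : MeasurableSet B) :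
    μ.real A + μ.real B - 1 ≤ μ.real (A ∩ B) := by
  linarith [measureReal_union_add_inter (μ := μ) (s := A) hB,
    measureReal_le_one (μ := μ) (s := A ∪ B)]

lemma one_sub_mem_Ioo_zero_one {u : ℝ} (hu : u ∈ Ioo (0 : ℝ) 1) : 1 - u ∈ Ioo (0 : ℝ) 1 :=
  ⟨by linarith [hu.2], by linarith [hu.1]⟩

lemma volume_eq_ofReal_of_Ioo_subset_of_subset_Icc {S : Set ℝ} {a b : ℝ} (h₁ : Ioo a b ⊆ S)
    (h₂ : S ⊆ Icc a b) : volume S = ENNReal.ofReal (b - a) :=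
  le_antisymm ((measure_mono h₂).trans_eq Real.volume_Icc) (Real.volume_Ioo ▸ measure_mono h₁)

namespace ProbabilityTheory

/-- For `u ≤ 0` the set is all of `ℝ` and for `1 < u` it is empty; `sInf` then gives junk `0`. -/
noncomputable def quantile (ν : Measure ℝ) (u : ℝ) : ℝ := sInf {y | u ≤ cdf ν y}

variable {ν : Measure ℝ} {u : ℝ}

lemma bddBelow_setOf_le_cdf (hu : 0 < u) : BddBelow {y | u ≤ cdf ν y} := by
  obtain ⟨y₀, hy₀⟩ :=
    ((tendsto_cdf_atBot ν).eventually (eventually_lt_nhds hu)).exists_forall_of_atBot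
  exact ⟨y₀, fun y hy => le_of_not_gt fun hyy₀ => (hy₀ y hyy₀.le).not_ge hy⟩

lemma nonempty_setOf_le_cdf (hu : u < 1) : {y | u ≤ cdf ν y}.Nonempty :=
  ((tendsto_cdf_atTop ν).eventually (eventually_gt_nhds hu)).exists.imp fun _ hy => hy.le

lemma quantile_le_iff (hu : u ∈ Ioo 0 1) {s : ℝ} : quantile ν u ≤ s ↔ u ≤ cdf ν s := by
  refine ⟨fun h => ?_, fun h => csInf_le (bddBelow_setOf_le_cdf hu.1) h⟩
  refine ge_of_tendsto (((cdf ν).right_continuous s).mono Ioi_subset_Ici_self).tendsto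
    (eventually_nhdsWithin_of_forall fun x hx => ?_)
  obtain ⟨y, hy, hyx⟩ := (csInf_lt_iff (bddBelow_setOf_le_cdf hu.1)
    (nonempty_setOf_le_cdf hu.2)).1 (h.trans_lt hx)
  exact hy.trans (monotone_cdf ν hyx.le)

lemma monotoneOn_quantile : MonotoneOn (quantile ν) (Ioo 0 1) := fun _ hu _ hv huv =>
  csInf_le_csInf (bddBelow_setOf_le_cdf hu.1) (nonempty_setOf_le_cdf hv.2)
    fun _ hy => huv.trans hy

lemma quantile_one_sub_le_iff (hu : u ∈ Ioo 0 1) {t : ℝ} :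
    quantile ν (1 - u) ≤ t ↔ 1 - cdf ν t ≤ u := by
  rw [quantile_le_iff (one_sub_mem_Ioo_zero_one hu)]
  constructor <;> intro <;> linarith

lemma volume_setOf_quantile_le (s : ℝ) :
    volume ({u | quantile ν u ≤ s} ∩ Ioo 0 1) = ENNReal.ofReal (cdf ν s) := by
  rw [← sub_zero (cdf ν s)]
  refine volume_eq_ofReal_of_Ioo_subset_of_subset_Icc (fun u hu => ?_) fun u ⟨hus, hu⟩ =>
    ⟨hu.1.le, (quantile_le_iff hu).1 hus⟩
  have hu' : u ∈ Ioo (0 : ℝ) 1 := ⟨hu.1, hu.2.trans_le (cdf_le_one ν s)⟩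
  exact ⟨(quantile_le_iff hu').2 hu.2.le, hu'⟩

lemma volume_setOf_quantile_one_sub_le (t : ℝ) :
    volume ({u | quantile ν (1 - u) ≤ t} ∩ Ioo 0 1) = ENNReal.ofReal (cdf ν t) := by
  rw [← sub_sub_cancel 1 (cdf ν t)]
  refine volume_eq_ofReal_of_Ioo_subset_of_subset_Icc (fun u hu => ?_) fun u ⟨hut, hu⟩ =>
    ⟨(quantile_one_sub_le_iff hu).1 hut, hu.2.le⟩
  have hu' : u ∈ Ioo (0 : ℝ) 1 := ⟨(sub_nonneg.2 (cdf_le_one ν t)).trans_lt hu.1, hu.2⟩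
  exact ⟨(quantile_one_sub_le_iff hu').2 hu.1.le, hu'⟩

lemma volume_setOf_quantile_le_and_quantile_one_sub_le (ν₁ ν₀ : Measure ℝ) (s t : ℝ) :
    volume ({u | quantile ν₁ u ≤ s ∧ quantile ν₀ (1 - u) ≤ t} ∩ Ioo 0 1) =
      ENNReal.ofReal (cdf ν₁ s + cdf ν₀ t - 1) := by
  rw [show cdf ν₁ s + cdf ν₀ t - 1 = cdf ν₁ s - (1 - cdf ν₀ t) by ring]
  refine volume_eq_ofReal_of_Ioo_subset_of_subset_Icc (fun u hu => ?_) fun u ⟨⟨hus, hut⟩, hu⟩ =>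
    ⟨(quantile_one_sub_le_iff hu).1 hut, (quantile_le_iff hu).1 hus⟩
  have hu' : u ∈ Ioo (0 : ℝ) 1 :=
    ⟨(sub_nonneg.2 (cdf_le_one ν₀ t)).trans_lt hu.1, hu.2.trans_le (cdf_le_one ν₁ s)⟩
  exact ⟨⟨(quantile_le_iff hu').2 hu.2.le, (quantile_one_sub_le_iff hu').2 hu.1.le⟩, hu'⟩

noncomputable def countermonotoneCoupling (ν₁ ν₀ : Measure ℝ) : Measure (ℝ × ℝ) :=
  (volume.restrict (Ioo 0 1)).map fun u => (quantile ν₁ u, quantile ν₀ (1 - u))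

section Coupling

variable (ν₁ ν₀ : Measure ℝ)

lemma aemeasurable_quantile_prod_quantile_one_sub :
    AEMeasurable (fun u => (quantile ν₁ u, quantile ν₀ (1 - u))) (volume.restrict (Ioo 0 1)) :=
  (aemeasurable_restrict_of_monotoneOn measurableSet_Ioo monotoneOn_quantile).prodMk
    (aemeasurable_restrict_of_antitoneOn measurableSet_Ioo fun _ hu _ hv huv =>
      monotoneOn_quantile (one_sub_mem_Ioo_zero_one hv) (one_sub_mem_Ioo_zero_one hu) (by linarith))

instance : IsProbabilityMeasure (countermonotoneCoupling ν₁ ν₀) :=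
  have : IsProbabilityMeasure (volume.restrict (Ioo (0 : ℝ) 1)) := ⟨by simp⟩
  Measure.isProbabilityMeasure_map (aemeasurable_quantile_prod_quantile_one_sub ν₁ ν₀)

lemma countermonotoneCoupling_apply {S : Set (ℝ × ℝ)} (hS : MeasurableSet S) :
    countermonotoneCoupling ν₁ ν₀ S =
      volume ((fun u => (quantile ν₁ u, quantile ν₀ (1 - u))) ⁻¹' S ∩ Ioo 0 1) := by
  rw [countermonotoneCoupling, Measure.map_apply_of_aemeasurable
      (aemeasurable_quantile_prod_quantile_one_sub ν₁ ν₀) hS,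
    Measure.restrict_apply' measurableSet_Ioo]

lemma fst_countermonotoneCoupling [IsProbabilityMeasure ν₁] :
    (countermonotoneCoupling ν₁ ν₀).fst = ν₁ :=
  Measure.ext_of_Iic _ _ fun s => by
    rw [Measure.fst_apply measurableSet_Iic,
      countermonotoneCoupling_apply _ _ (measurable_fst measurableSet_Iic), ← ofReal_cdf]
    exact volume_setOf_quantile_le s

lemma snd_countermonotoneCoupling [IsProbabilityMeasure ν₀] :
    (countermonotoneCoupling ν₁ ν₀).snd = ν₀ :=
  Measure.ext_of_Iic _ _ fun t => by
    rw [Measure.snd_apply measurableSet_Iic,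
      countermonotoneCoupling_apply _ _ (measurable_snd measurableSet_Iic), ← ofReal_cdf]
    exact volume_setOf_quantile_one_sub_le t

lemma countermonotoneCoupling_real_Iic_prod_Iic (s t : ℝ) :
    (countermonotoneCoupling ν₁ ν₀).real (Iic s ×ˢ Iic t) = max (cdf ν₁ s + cdf ν₀ t - 1) 0 := by
  rw [measureReal_def,
    countermonotoneCoupling_apply _ _ (measurableSet_Iic.prod measurableSet_Iic),
    ← ENNReal.toReal_ofReal']
  exact congrArg _ (volume_setOf_quantile_le_and_quantile_one_sub_le ν₁ ν₀ s t)

lemma integral_countermonotoneCoupling :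
    ∫ p, p.1 * p.2 ∂countermonotoneCoupling ν₁ ν₀ =
      ∫ u in (0 : ℝ)..1, quantile ν₁ u * quantile ν₀ (1 - u) := by
  rw [intervalIntegral.integral_of_le zero_le_one, integral_Ioc_eq_integral_Ioo,
    countermonotoneCoupling, integral_map (aemeasurable_quantile_prod_quantile_one_sub ν₁ ν₀)
      (f := fun p : ℝ × ℝ => p.1 * p.2) (by fun_prop)]

end Coupling

lemma countermonotoneCoupling_real_Iic_prod_Iic_le (μ : Measure (ℝ × ℝ)) [IsProbabilityMeasure μ]
    (s t : ℝ) :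
    (countermonotoneCoupling μ.fst μ.snd).real (Iic s ×ˢ Iic t) ≤ μ.real (Iic s ×ˢ Iic t) := by
  rw [countermonotoneCoupling_real_Iic_prod_Iic, cdf_eq_real, cdf_eq_real,
    Measure.fst_real_apply measurableSet_Iic, Measure.snd_real_apply measurableSet_Iic,
    Set.prod_eq]
  exact max_le (add_measureReal_sub_one_le_measureReal_inter (measurable_snd measurableSet_Iic))
    measureReal_nonneg

end ProbabilityTheory

lemma integrable_indicator_Ico_one (a b : ℝ) : Integrable ((Ico a b).indicator (1 : ℝ → ℝ)) :=
  (integrable_indicator_iff measurableSet_Ico).2 (integrableOn_const (by simp))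

namespace Hoeffding

noncomputable def kernel (x s : ℝ) : ℝ := (Ico 0 x).indicator 1 s - (Ico x 0).indicator 1 s

lemma kernel_eq_indicator_sub (x s : ℝ) :
    kernel x s = (Ici 0).indicator 1 s - (Iic s).indicator 1 x := by
  simp only [kernel, indicator, mem_Ico, mem_Ici, mem_Iic, Pi.one_apply]
  split_ifs <;> grind

lemma measurable_kernel : Measurable (Function.uncurry kernel) := by
  have : Function.uncurry kernel =
      fun z : ℝ × ℝ => (Ici 0).indicator 1 z.2 - (Iic z.2).indicator 1 z.1 :=
    funext fun z => kernel_eq_indicator_sub z.1 z.2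
  rw [this]
  refine (measurable_one.indicator measurableSet_Ici).comp measurable_snd |>.sub ?_
  simp only [indicator, mem_Iic]
  exact Measurable.ite (measurableSet_le measurable_fst measurable_snd) measurable_const
    measurable_const

lemma integrable_kernel (x : ℝ) : Integrable (kernel x) :=
  (integrable_indicator_Ico_one 0 x).sub (integrable_indicator_Ico_one x 0)

lemma integral_kernel (x : ℝ) : ∫ s, kernel x s = x := by
  simp only [kernel]
  rw [integral_sub (integrable_indicator_Ico_one 0 x) (integrable_indicator_Ico_one x 0),
    integral_indicator_one measurableSet_Ico, integral_indicator_one measurableSet_Ico,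
    Real.volume_real_Ico, Real.volume_real_Ico]
  rcases le_total 0 x with hx | hx <;> simp [hx]

lemma abs_kernel (x s : ℝ) :
    |kernel x s| = (Ico 0 x).indicator 1 s + (Ico x 0).indicator 1 s := by
  simp only [kernel, indicator, mem_Ico, Pi.one_apply]
  split_ifs <;> grind

lemma integral_abs_kernel (x : ℝ) : ∫ s, |kernel x s| = |x| := by
  simp_rw [abs_kernel]
  rw [integral_add (integrable_indicator_Ico_one 0 x) (integrable_indicator_Ico_one x 0),
    integral_indicator_one measurableSet_Ico, integral_indicator_one measurableSet_Ico,
    Real.volume_real_Ico, Real.volume_real_Ico]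
  rcases le_total 0 x with hx | hx <;> simp [hx, abs_of_nonneg, abs_of_nonpos]

lemma integral_kernel_mul_kernel (x y : ℝ) :
    ∫ q : ℝ × ℝ, kernel x q.1 * kernel y q.2 = x * y := by
  rw [Measure.volume_eq_prod, integral_prod_mul, integral_kernel, integral_kernel]

variable {ρ : Measure (ℝ × ℝ)}

lemma integrable_kernel_mul_kernel (hρ : Integrable (fun p : ℝ × ℝ => p.1 * p.2) ρ) :
    Integrable (fun z : (ℝ × ℝ) × (ℝ × ℝ) => kernel z.1.1 z.2.1 * kernel z.1.2 z.2.2)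
      (ρ.prod volume) := by
  have hmeas : Measurable fun z : (ℝ × ℝ) × (ℝ × ℝ) => kernel z.1.1 z.2.1 * kernel z.1.2 z.2.2 :=
    (measurable_kernel.comp (measurable_fst.fst.prodMk measurable_snd.fst)).mul
      (measurable_kernel.comp (measurable_fst.snd.prodMk measurable_snd.snd))
  refine (integrable_prod_iff hmeas.aestronglyMeasurable).2 ⟨.of_forall fun p => ?_, ?_⟩
  · rw [Measure.volume_eq_prod]
    exact (integrable_kernel p.1).mul_prod (integrable_kernel p.2)
  · refine hρ.norm.congr (.of_forall fun p => ?_)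
    simp only [norm_mul, Real.norm_eq_abs]
    rw [Measure.volume_eq_prod,
      integral_prod_mul (fun s => |kernel p.1 s|) (fun t => |kernel p.2 t|),
      integral_abs_kernel, integral_abs_kernel]

lemma integral_fst_mul_snd_eq_integral_kernel [SFinite ρ]
    (hρ : Integrable (fun p : ℝ × ℝ => p.1 * p.2) ρ) :
    ∫ p, p.1 * p.2 ∂ρ = ∫ q : ℝ × ℝ, ∫ p, kernel p.1 q.1 * kernel p.2 q.2 ∂ρ := by
  calc ∫ p, p.1 * p.2 ∂ρ = ∫ p, (∫ q : ℝ × ℝ, kernel p.1 q.1 * kernel p.2 q.2) ∂ρ := by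
        simp only [integral_kernel_mul_kernel]
    _ = _ := integral_integral_swap (integrable_kernel_mul_kernel hρ)

lemma integral_kernel_mul_kernel_eq [IsFiniteMeasure ρ] (s t : ℝ) :
    ∫ p, kernel p.1 s * kernel p.2 t ∂ρ =
      (Ici 0).indicator 1 s * (Ici 0).indicator 1 t * ρ.real univ
        - (Ici 0).indicator 1 s * ρ.snd.real (Iic t)
        - (Ici 0).indicator 1 t * ρ.fst.real (Iic s)
        + ρ.real (Iic s ×ˢ Iic t) := by
  set a : ℝ := (Ici 0).indicator 1 s
  set b : ℝ := (Ici 0).indicator 1 t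
  have hA : MeasurableSet (Prod.fst ⁻¹' Iic s : Set (ℝ × ℝ)) := measurable_fst measurableSet_Iic
  have hB : MeasurableSet (Prod.snd ⁻¹' Iic t : Set (ℝ × ℝ)) := measurable_snd measurableSet_Iic
  have hAB : MeasurableSet (Iic s ×ˢ Iic t) := measurableSet_Iic.prod measurableSet_Iic
  have h : ∀ p : ℝ × ℝ, kernel p.1 s * kernel p.2 t =
      a * b - a * (Prod.snd ⁻¹' Iic t).indicator 1 p - b * (Prod.fst ⁻¹' Iic s).indicator 1 p
        + (Iic s ×ˢ Iic t).indicator 1 p := by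
    intro p
    simp only [a, b, kernel_eq_indicator_sub, indicator, mem_preimage, mem_prod, mem_Iic,
      Pi.one_apply]
    split_ifs <;> grind
  have hint : ∀ {S : Set (ℝ × ℝ)}, MeasurableSet S → Integrable (S.indicator 1) ρ :=
    fun hS => (integrable_const (1 : ℝ)).indicator hS
  have iA := (hint hA).const_mul b
  have iB := (hint hB).const_mul a
  have iC := integrable_const (μ := ρ) (a * b)
  rw [integral_congr_ae (.of_forall h), integral_add _ (hint hAB), integral_sub, integral_sub,
    integral_const, integral_const_mul, integral_const_mul, integral_indicator_one hA,
    integral_indicator_one hB, integral_indicator_one hAB, smul_eq_mul, mul_comm (ρ.real univ),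
    Measure.fst_real_apply measurableSet_Iic, Measure.snd_real_apply measurableSet_Iic]
  all_goals first | exact iC | exact iA | exact iB | exact iC.sub iB | exact (iC.sub iB).sub iA

lemma integral_fst_mul_snd_le_of_real_Iic_prod_Iic_le {μ ν : Measure (ℝ × ℝ)}
    [IsFiniteMeasure μ] [IsFiniteMeasure ν] (hμ : Integrable (fun p : ℝ × ℝ => p.1 * p.2) μ)
    (hν : Integrable (fun p : ℝ × ℝ => p.1 * p.2) ν) (h₁ : ν.fst = μ.fst) (h₂ : ν.snd = μ.snd)
    (hle : ∀ s t, ν.real (Iic s ×ˢ Iic t) ≤ μ.real (Iic s ×ˢ Iic t)) :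
    ∫ p, p.1 * p.2 ∂ν ≤ ∫ p, p.1 * p.2 ∂μ := by
  rw [integral_fst_mul_snd_eq_integral_kernel hμ, integral_fst_mul_snd_eq_integral_kernel hν]
  refine integral_mono (integrable_kernel_mul_kernel hν).integral_prod_right
    (integrable_kernel_mul_kernel hμ).integral_prod_right fun ⟨s, t⟩ => ?_
  have h_univ : ν.real univ = μ.real univ := by
    simp only [measureReal_def, ← Measure.fst_univ, h₁]
  simp only [integral_kernel_mul_kernel_eq, h_univ, h₁, h₂]
  linarith [hle s t]

end Hoeffding

lemma integrable_fst_mul_snd {ρ : Measure (ℝ × ℝ)}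
    (h₁ : Integrable (fun x : ℝ => x ^ 2) ρ.fst)
    (h₂ : Integrable (fun y : ℝ => y ^ 2) ρ.snd) :
    Integrable (fun p : ℝ × ℝ => p.1 * p.2) ρ := by
  have m₁ : MemLp Prod.fst 2 ρ := (memLp_map_measure_iff aestronglyMeasurable_id
    measurable_fst.aemeasurable).1 ((memLp_two_iff_integrable_sq aestronglyMeasurable_id).2 h₁)
  have m₂ : MemLp Prod.snd 2 ρ := (memLp_map_measure_iff aestronglyMeasurable_id
    measurable_snd.aemeasurable).1 ((memLp_two_iff_integrable_sq aestronglyMeasurable_id).2 h₂)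
  exact m₁.integrable_mul m₂

open ProbabilityTheory Hoeffding

/-- **Hoeffding's lower bound on the cross-moment.** If `μ` is a probability measure on `ℝ²`
whose marginals `ν₁, ν₀` (with CDFs `G, F` and quantile functions `Ginv, Finv`) have finite
second moments, then
`∫ x*y ∂μ ≥ ∫ u in (0,1), Ginv u * Finv (1-u)` (the countermonotonic cross-moment). -/
theorem stmt_4 (μ : Measure (ℝ × ℝ)) [IsProbabilityMeasure μ]
    (ν₁ ν₀ : Measure ℝ) (hν₁ : ν₁ = μ.map Prod.fst) (hν₀ : ν₀ = μ.map Prod.snd)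
    (hsq₁ : Integrable (fun x : ℝ => x ^ 2) ν₁)
    (hsq₀ : Integrable (fun y : ℝ => y ^ 2) ν₀)
    (G F : ℝ → ℝ) (hG : ∀ t, G t = (ν₁ (Set.Iic t)).toReal)
    (hF : ∀ t, F t = (ν₀ (Set.Iic t)).toReal)
    (Ginv Finv : ℝ → ℝ) (hGinv : ∀ u, Ginv u = sInf {y : ℝ | u ≤ G y})
    (hFinv : ∀ u, Finv u = sInf {y : ℝ | u ≤ F y}) :
    ∫ u in (0:ℝ)..1, Ginv u * Finv (1 - u) ≤ ∫ p : ℝ × ℝ, p.1 * p.2 ∂μ := by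
  obtain rfl : ν₁ = μ.fst := hν₁
  obtain rfl : ν₀ = μ.snd := hν₀
  obtain rfl : G = cdf μ.fst := funext fun t => (hG t).trans (cdf_eq_real _ t).symm
  obtain rfl : F = cdf μ.snd := funext fun t => (hF t).trans (cdf_eq_real _ t).symm
  obtain rfl : Ginv = quantile μ.fst := funext hGinv
  obtain rfl : Finv = quantile μ.snd := funext hFinv
  rw [← integral_countermonotoneCoupling]
  refine integral_fst_mul_snd_le_of_real_Iic_prod_Iic_le (integrable_fst_mul_snd hsq₁ hsq₀)
    (integrable_fst_mul_snd ?_ ?_) (fst_countermonotoneCoupling _ _)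
    (snd_countermonotoneCoupling _ _) (countermonotoneCoupling_real_Iic_prod_Iic_le μ)
  · rwa [fst_countermonotoneCoupling]
  · rwa [snd_countermonotoneCoupling]
end

section
/- Let BL = { f : ℝ → ℝ : f is 1-Lipschitz and |f(x)| ≤ 1 for all x }. Fix π ∈ (0,1) and C > 0. For each N ≥ 1 let y_{N,1},…,y_{N,N} ∈ ℝ with (1/N) ∑_i |y_{N,i}| ≤ C, and let T_{N,1},…,T_{N,N} be i.i.d. Bernoulli(π) random variables. Then sup_{f ∈ BL} | (1/(Nπ)) ∑_i T_{N,i} f(y_{N,i}) − (1/N) ∑_i f(y_{N,i}) | → 0 in probability as N → ∞. That is, the bounded-Lipschitz class is P-Glivenko–Cantelli for Horvitz–Thompson empirical distributions over L¹-bounded finite populations under Bernoulli sampling. -/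
open MeasureTheory ProbabilityTheory

/-- The Bernoulli(π) distribution on `ℝ`: mass `π` at `1` and mass `1 - π` at `0`. -/
noncomputable def bernoulliReal (π : ℝ) : Measure ℝ :=
  ENNReal.ofReal π • Measure.dirac (1 : ℝ) + ENNReal.ofReal (1 - π) • Measure.dirac (0 : ℝ)

/-- The class of 1-bounded 1-Lipschitz functions `ℝ → [-1,1]`. -/
def BL : Set (ℝ → ℝ) :=
  {f : ℝ → ℝ | LipschitzWith 1 f ∧ ∀ x, |f x| ≤ 1}

/-!
The deviation equals `(Nπ)⁻¹ ∑ (T i - π) f (y i)`, with weights `|T i - π| ≤ 1`. Cut `[-Kδ, Kδ)`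
into `2K` cells of width `δ`: on a cell every `f ∈ BL` is within `δ` of a constant, and outside
the window `1 ≤ |y| / (Kδ)`. Uniformly in `f`, the deviation is therefore at most the `2K` cell
sums `|∑_{i ∈ cell} (T i - π)| / (Nπ)` plus `δ / π + C / (πKδ)`. Each cell sum has variance at
most `Nπ(1 - π)`, so Chebyshev's inequality and a union bound over the cells make a deviation
`≥ ε` have probability `O(K³ / N)` once `δ` and `K` are chosen with `δ / π + C / (πKδ) ≤ ε / 2`.
-/

open Finset Filter

section Bernoulli

variable {π : ℝ}

lemma integral_bernoulliReal (hπ0 : 0 ≤ π) (hπ1 : π ≤ 1) (g : ℝ → ℝ) :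
    ∫ x, g x ∂bernoulliReal π = π * g 1 + (1 - π) * g 0 := by
  have hdirac (a : ℝ) : Integrable g (Measure.dirac a) := integrable_dirac enorm_lt_top
  rw [bernoulliReal, integral_add_measure ((hdirac 1).smul_measure ENNReal.ofReal_ne_top)
    ((hdirac 0).smul_measure ENNReal.ofReal_ne_top), integral_smul_measure,
    integral_smul_measure, integral_dirac, integral_dirac, ENNReal.toReal_ofReal hπ0,
    ENNReal.toReal_ofReal (sub_nonneg.2 hπ1), smul_eq_mul, smul_eq_mul]

lemma ae_bernoulliReal : ∀ᵐ x ∂bernoulliReal π, x = 0 ∨ x = 1 := by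
  have hmeas : MeasurableSet {x : ℝ | x = 0 ∨ x = 1} :=
    (measurableSet_singleton 0).union (measurableSet_singleton 1)
  rw [bernoulliReal, ae_add_measure_iff]
  exact ⟨Measure.ae_smul_measure ((ae_dirac_iff hmeas).2 (Or.inr rfl)) _,
    Measure.ae_smul_measure ((ae_dirac_iff hmeas).2 (Or.inl rfl)) _⟩

variable {Ω : Type*} [MeasurableSpace Ω] {P : Measure Ω} {T : Ω → ℝ}

lemma ae_eq_zero_or_eq_one_of_map_eq_bernoulliReal (hT : Measurable T)
    (hlaw : P.map T = bernoulliReal π) : ∀ᵐ ω ∂P, T ω = 0 ∨ T ω = 1 :=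
  ae_of_ae_map hT.aemeasurable (hlaw ▸ ae_bernoulliReal)

lemma memLp_of_map_eq_bernoulliReal [IsFiniteMeasure P] (hT : Measurable T)
    (hlaw : P.map T = bernoulliReal π) (p : ENNReal) : MemLp T p P := by
  refine MemLp.of_bound hT.aestronglyMeasurable 1 ?_
  filter_upwards [ae_eq_zero_or_eq_one_of_map_eq_bernoulliReal hT hlaw] with ω hω
  rcases hω with h | h <;> simp [h]

lemma integral_of_map_eq_bernoulliReal (hπ0 : 0 ≤ π) (hπ1 : π ≤ 1) (hT : Measurable T)
    (hlaw : P.map T = bernoulliReal π) : P[T] = π := by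
  have := integral_map (μ := P) hT.aemeasurable (f := fun x => x) aestronglyMeasurable_id
  rw [hlaw, integral_bernoulliReal hπ0 hπ1] at this
  linarith

lemma variance_of_map_eq_bernoulliReal (hπ0 : 0 ≤ π) (hπ1 : π ≤ 1) (hT : Measurable T)
    (hlaw : P.map T = bernoulliReal π) : Var[T; P] = π * (1 - π) := by
  have := integral_map (μ := P) hT.aemeasurable (f := fun x => (x - π) ^ 2) (by fun_prop)
  rw [hlaw, integral_bernoulliReal hπ0 hπ1] at this
  rw [variance_eq_integral hT.aemeasurable, integral_of_map_eq_bernoulliReal hπ0 hπ1 hT hlaw,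
    ← this]
  ring

end Bernoulli

section IndependentBernoulli

variable {Ω ι : Type*} [MeasurableSpace Ω] {P : Measure Ω} [IsProbabilityMeasure P] {π : ℝ}
  {T : ι → Ω → ℝ}

lemma meas_ge_abs_sum_sub_le (hπ0 : 0 ≤ π) (hπ1 : π ≤ 1) (hT : ∀ i, Measurable (T i))
    (hindep : iIndepFun T P) (hlaw : ∀ i, P.map (T i) = bernoulliReal π) (s : Finset ι)
    {c : ℝ} (hc : 0 < c) :
    P {ω | c ≤ |∑ i ∈ s, (T i ω - π)|} ≤ ENNReal.ofReal (#s * (π * (1 - π)) / c ^ 2) := by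
  have hmemLp (i : ι) : MemLp (T i) 2 P := memLp_of_map_eq_bernoulliReal (hT i) (hlaw i) 2
  have hmean : P[∑ i ∈ s, T i] = #s * π := by
    simp [integral_finsetSum s fun i _ => (hmemLp i).integrable one_le_two,
      integral_of_map_eq_bernoulliReal hπ0 hπ1 (hT _) (hlaw _)]
  have hvar : Var[∑ i ∈ s, T i; P] = #s * (π * (1 - π)) := by
    simp [IndepFun.variance_sum (fun i _ => hmemLp i) fun i _ j _ hij => hindep.indepFun hij,
      variance_of_map_eq_bernoulliReal hπ0 hπ1 (hT _) (hlaw _)]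
  have hcheb := meas_ge_le_variance_div_sq (memLp_finsetSum' s fun i _ => hmemLp i) hc
  rw [hvar, hmean] at hcheb
  convert hcheb using 5 with ω
  simp [sum_sub_distrib]

end IndependentBernoulli

section Cells

lemma abs_sum_mul_le_of_abs_sub_le {ι : Type*} (s : Finset ι) {w g : ι → ℝ} {c δ : ℝ}
    (hw : ∀ i ∈ s, |w i| ≤ 1) (hc : |c| ≤ 1) (hg : ∀ i ∈ s, |g i - c| ≤ δ) :
    |∑ i ∈ s, w i * g i| ≤ |∑ i ∈ s, w i| + #s * δ := by
  have hsplit : ∑ i ∈ s, w i * g i = (∑ i ∈ s, w i) * c + ∑ i ∈ s, w i * (g i - c) := by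
    rw [sum_mul, ← sum_add_distrib]
    exact sum_congr rfl fun i _ => by ring
  calc |∑ i ∈ s, w i * g i|
      ≤ |∑ i ∈ s, w i| * |c| + ∑ i ∈ s, |w i| * |g i - c| := by
        rw [hsplit, ← abs_mul]
        refine (abs_add_le _ _).trans (add_le_add_right ?_ _)
        simpa only [abs_mul] using abs_sum_le_sum_abs (fun i => w i * (g i - c)) s
    _ ≤ |∑ i ∈ s, w i| * 1 + ∑ i ∈ s, 1 * δ := by
        gcongr with i hi
        · exact hw i hi
        · exact hg i hi
    _ = |∑ i ∈ s, w i| + #s * δ := by simp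

lemma abs_sub_floor_div_mul_le {δ : ℝ} (hδ : 0 < δ) (x : ℝ) : |x - ⌊x / δ⌋ * δ| ≤ δ := by
  have hlo : ⌊x / δ⌋ * δ ≤ x := (le_div_iff₀ hδ).1 (Int.floor_le _)
  have hhi : x < (⌊x / δ⌋ + 1) * δ := (div_lt_iff₀ hδ).1 (Int.lt_floor_add_one _)
  rw [abs_le]
  constructor <;> nlinarith

lemma card_Ico_neg_self (K : ℕ) : #(Ico (-K : ℤ) K) = 2 * K := by
  rw [Int.card_Ico]
  omega

lemma le_abs_of_floor_div_notMem_Ico {δ x : ℝ} (hδ : 0 < δ) {K : ℕ}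
    (hx : ⌊x / δ⌋ ∉ Ico (-K : ℤ) K) : K * δ ≤ |x| := by
  rw [mem_Ico, not_and_or, not_le, not_lt, Int.floor_lt, Int.le_floor] at hx
  push_cast at hx
  rcases hx with hx | hx
  · have := (div_lt_iff₀ hδ).1 hx
    rw [abs_of_neg (by nlinarith)]
    linarith
  · have := (le_div_iff₀ hδ).1 hx
    exact this.trans (le_abs_self x)

theorem abs_sum_mul_le_sum_cells {ι : Type*} [Fintype ι] {w : ι → ℝ} (hw : ∀ i, |w i| ≤ 1)
    (y : ι → ℝ) {f : ℝ → ℝ} (hf : f ∈ BL) {δ : ℝ} (hδ : 0 < δ) {K : ℕ} (hK : 0 < K) :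
    |∑ i, w i * f (y i)| ≤ ∑ j ∈ Ico (-K : ℤ) K, |∑ i with ⌊y i / δ⌋ = j, w i|
      + Fintype.card ι * δ + (∑ i, |y i|) / (K * δ) := by
  set J := Ico (-K : ℤ) K
  set κ : ι → ℤ := fun i => ⌊y i / δ⌋
  have hcell (j : ℤ) : |∑ i with κ i = j, w i * f (y i)|
      ≤ |∑ i with κ i = j, w i| + #{i | κ i = j} * δ := by
    refine abs_sum_mul_le_of_abs_sub_le _ (fun i _ => hw i) (hf.2 (j * δ)) fun i hi => ?_
    rw [(mem_filter.1 hi).2.symm]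
    calc |f (y i) - f (κ i * δ)| ≤ |y i - κ i * δ| := by
          simpa [Real.dist_eq] using hf.1.dist_le_mul (y i) (κ i * δ)
      _ ≤ δ := abs_sub_floor_div_mul_le hδ (y i)
  have htail (i : ι) (hi : κ i ∉ J) : |w i * f (y i)| ≤ |y i| / (K * δ) := by
    rw [le_div_iff₀ (by positivity), abs_mul]
    calc |w i| * |f (y i)| * (K * δ) ≤ 1 * 1 * (K * δ) := by
          gcongr
          exacts [hw i, hf.2 _]
      _ ≤ |y i| := by simpa using le_abs_of_floor_div_notMem_Ico hδ hi
  have hcard : ∑ j ∈ J, (#{i | κ i = j} : ℝ) * δ ≤ Fintype.card ι * δ := by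
    rw [← sum_mul, ← Nat.cast_sum, sum_card_fiberwise_eq_card_filter]
    gcongr
    exact card_filter_le _ _
  calc |∑ i, w i * f (y i)|
      = |∑ j ∈ J, ∑ i with κ i = j, w i * f (y i) + ∑ i with κ i ∉ J, w i * f (y i)| := by
        rw [sum_fiberwise_eq_sum_filter, sum_filter_add_sum_filter_not]
    _ ≤ ∑ j ∈ J, |∑ i with κ i = j, w i * f (y i)| + ∑ i with κ i ∉ J, |w i * f (y i)| :=
        (abs_add_le _ _).trans (add_le_add (abs_sum_le_sum_abs _ _) (abs_sum_le_sum_abs _ _))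
    _ ≤ ∑ j ∈ J, (|∑ i with κ i = j, w i| + #{i | κ i = j} * δ)
          + ∑ i with κ i ∉ J, |y i| / (K * δ) := by
        gcongr with j _ i hi
        exacts [hcell j, htail i (mem_filter.1 hi).2]
    _ ≤ ∑ j ∈ J, |∑ i with κ i = j, w i| + Fintype.card ι * δ + ∑ i, |y i| / (K * δ) := by
        rw [sum_add_distrib]
        gcongr _ + ?_ + ?_
        exact sum_le_sum_of_subset_of_nonneg (filter_subset _ _) fun i _ _ => by positivity
    _ = _ := by rw [sum_div]

end Cells

instance : Nonempty BL :=
  ⟨⟨0, LipschitzWith.const' 0, by simp⟩⟩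

noncomputable def htDeviation {N : ℕ} (π : ℝ) (y t : Fin N → ℝ) (f : ℝ → ℝ) : ℝ :=
  (∑ i, t i * f (y i)) / ((N : ℝ) * π) - (∑ i, f (y i)) / (N : ℝ)

lemma htDeviation_eq {N : ℕ} {π : ℝ} (hπ : π ≠ 0) (y t : Fin N → ℝ) (f : ℝ → ℝ) :
    htDeviation π y t f = (∑ i, (t i - π) * f (y i)) / (N * π) := by
  simp_rw [htDeviation, sub_mul, sum_sub_distrib, sub_div, ← mul_sum,
    mul_comm (N : ℝ) π, mul_div_mul_left _ _ hπ]

theorem iSup_abs_htDeviation_lt {N : ℕ} (hN : 0 < N) {π : ℝ} (hπ : 0 < π) (y t : Fin N → ℝ)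
    (ht : ∀ i, |t i - π| ≤ 1) {ε δ C : ℝ} (hδ : 0 < δ) {K : ℕ} (hK : 0 < K)
    (hy : (∑ i, |y i|) / N ≤ C) (hδK : δ / π + C / (π * K * δ) ≤ ε / 2)
    (hcells : ∀ j ∈ Ico (-K : ℤ) K, |∑ i with ⌊y i / δ⌋ = j, (t i - π)| < ε * N * π / (4 * K)) :
    ⨆ f : BL, |htDeviation π y t f| < ε := by
  set J := Ico (-K : ℤ) K
  have hNπ : 0 < (N : ℝ) * π := by positivity
  have hcells_sum : (∑ j ∈ J, |∑ i with ⌊y i / δ⌋ = j, (t i - π)|) / (N * π) < ε / 2 := by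
    rw [div_lt_iff₀ hNπ]
    calc _ < ∑ j ∈ J, ε * N * π / (4 * K) := sum_lt_sum_of_nonempty ⟨0, by simp [J, hK]⟩ hcells
      _ = ε / 2 * (N * π) := by
        rw [sum_const, card_Ico_neg_self, nsmul_eq_mul]
        field_simp
        push_cast
        ring
  have htail : (∑ i, |y i|) / (N * π * (K * δ)) ≤ C / (π * K * δ) := by
    rw [show (N : ℝ) * π * (K * δ) = N * (π * K * δ) by ring, ← div_div]
    gcongr
  have hdev_le (f : BL) : |htDeviation π y t f|
      ≤ (∑ j ∈ J, |∑ i with ⌊y i / δ⌋ = j, (t i - π)|) / (N * π) + δ / π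
        + (∑ i, |y i|) / (N * π * (K * δ)) := by
    rw [htDeviation_eq hπ.ne', abs_div, abs_of_pos hNπ]
    calc _ ≤ (∑ j ∈ J, |∑ i with ⌊y i / δ⌋ = j, (t i - π)|
          + Fintype.card (Fin N) * δ + (∑ i, |y i|) / (K * δ)) / (N * π) :=
          div_le_div_of_nonneg_right (abs_sum_mul_le_sum_cells ht y f.2 hδ hK) hNπ.le
      _ = _ := by
          rw [Fintype.card_fin]
          field_simp
  exact (ciSup_le hdev_le).trans_lt (by linarith)

theorem measure_le_iSup_abs_htDeviation_le {Ω : Type*} [MeasurableSpace Ω] {P : Measure Ω}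
    [IsProbabilityMeasure P] {π : ℝ} (hπ0 : 0 < π) (hπ1 : π ≤ 1) {N : ℕ} (hN : 0 < N)
    (y : Fin N → ℝ) {T : Fin N → Ω → ℝ} (hT : ∀ i, Measurable (T i)) (hindep : iIndepFun T P)
    (hlaw : ∀ i, P.map (T i) = bernoulliReal π) {ε δ C : ℝ} (hδ : 0 < δ) {K : ℕ} (hK : 0 < K)
    (hy : (∑ i, |y i|) / N ≤ C) (hδK : δ / π + C / (π * K * δ) ≤ ε / 2) :
    P {ω | ε ≤ ⨆ f : BL, |htDeviation π y (fun i => T i ω) f|}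
      ≤ ENNReal.ofReal (32 * K ^ 3 * (1 - π) / (ε ^ 2 * π) / N) := by
  have hε : 0 < ε := by
    have : 0 ≤ C := (by positivity : 0 ≤ (∑ i, |y i|) / N).trans hy
    have : 0 ≤ C / (π * K * δ) := by positivity
    have : 0 < δ / π := by positivity
    linarith
  set J := Ico (-K : ℤ) K
  set cell : ℤ → Finset (Fin N) := fun j => {i | ⌊y i / δ⌋ = j}
  set c := ε * N * π / (4 * K)
  have hc : 0 < c := by positivity
  have hsub : {ω | ε ≤ ⨆ f : BL, |htDeviation π y (fun i => T i ω) f|}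
      ≤ᵐ[P] ⋃ j ∈ J, {ω | c ≤ |∑ i ∈ cell j, (T i ω - π)|} := by
    filter_upwards [ae_all_iff.2 fun i =>
      ae_eq_zero_or_eq_one_of_map_eq_bernoulliReal (hT i) (hlaw i)] with ω hω hdev
    by_contra hnot
    have ht (i : Fin N) : |T i ω - π| ≤ 1 := by
      rw [abs_le]
      rcases hω i with h | h <;> rw [h] <;> constructor <;> linarith
    exact hdev.not_gt <| iSup_abs_htDeviation_lt hN hπ0 y _ ht hδ hK hy hδK
      fun j hj => not_le.1 fun h => hnot (Set.mem_biUnion hj h)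
  calc _ ≤ P (⋃ j ∈ J, {ω | c ≤ |∑ i ∈ cell j, (T i ω - π)|}) := measure_mono_ae hsub
    _ ≤ ∑ j ∈ J, P {ω | c ≤ |∑ i ∈ cell j, (T i ω - π)|} := measure_biUnion_finset_le _ _
    _ ≤ ∑ j ∈ J, ENNReal.ofReal (N * (π * (1 - π)) / c ^ 2) := by
        refine sum_le_sum fun j _ =>
          (meas_ge_abs_sum_sub_le hπ0.le hπ1 hT hindep hlaw _ hc).trans ?_
        have hcard : (#(cell j) : ℝ) ≤ N := by simpa using card_le_univ (cell j)
        have hvar : 0 ≤ π * (1 - π) := mul_nonneg hπ0.le (sub_nonneg.2 hπ1)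
        gcongr
    _ = ENNReal.ofReal (32 * K ^ 3 * (1 - π) / (ε ^ 2 * π) / N) := by
        rw [← ENNReal.ofReal_sum_of_nonneg fun _ _ => by positivity, sum_const,
          card_Ico_neg_self, nsmul_eq_mul]
        congr 1
        simp only [c]
        field_simp
        push_cast
        ring

/-- **The bounded-Lipschitz class is P-Glivenko–Cantelli.** For finite populations
`y N : Fin N → ℝ` with `(1/N) ∑ |y N i| ≤ C` and i.i.d. Bernoulli(π) sampling indicators
`T N i`, the supremum over `BL` of the deviation of the Horvitz–Thompson empirical mean
from the population mean tends to `0` in probability as `N → ∞`. -/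
theorem stmt_13 (π : ℝ) (hπ : π ∈ Set.Ioo (0 : ℝ) 1) (C : ℝ) (hC : 0 < C)
    (y : (N : ℕ) → Fin N → ℝ)
    (hmom : ∀ N : ℕ, 1 ≤ N → (∑ i, |y N i|) / (N : ℝ) ≤ C)
    (Ω : ℕ → Type*) [∀ N, MeasurableSpace (Ω N)]
    (P : (N : ℕ) → Measure (Ω N)) [∀ N, IsProbabilityMeasure (P N)]
    (T : (N : ℕ) → Fin N → Ω N → ℝ)
    (hTmeas : ∀ N i, Measurable (T N i))
    (hTindep : ∀ N, iIndepFun (T N) (P N))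
    (hTlaw : ∀ N i, Measure.map (T N i) (P N) = bernoulliReal π) :
    ∀ ε > (0 : ℝ),
      Filter.Tendsto
        (fun N : ℕ => (P N) {ω | ε ≤ ⨆ f : BL,
          |(∑ i, T N i ω * f.1 (y N i)) / ((N : ℝ) * π)
            - (∑ i, f.1 (y N i)) / (N : ℝ)|})
        Filter.atTop (nhds 0) := by
  obtain ⟨hπ0, hπ1⟩ := hπ
  intro ε hε
  set δ := π * ε / 4
  set K := ⌈4 * C / (π * δ * ε)⌉₊
  have hK : 0 < K := Nat.ceil_pos.2 (by positivity)
  have hδK : δ / π + C / (π * K * δ) ≤ ε / 2 := by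
    have hKδ : 4 * C ≤ π * K * δ * ε := by
      have := Nat.le_ceil (4 * C / (π * δ * ε))
      rw [div_le_iff₀ (by positivity)] at this
      linarith
    have : C / (π * K * δ) ≤ ε / 4 := by
      rw [div_le_iff₀ (by positivity)]
      linarith
    have : δ / π = ε / 4 := by simp only [δ]; field_simp
    linarith
  have hlim := ENNReal.tendsto_ofReal
    (tendsto_const_div_atTop_nhds_zero_nat (32 * K ^ 3 * (1 - π) / (ε ^ 2 * π)))
  rw [ENNReal.ofReal_zero] at hlim
  refine tendsto_of_tendsto_of_tendsto_of_le_of_le' tendsto_const_nhds hlim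
    (.of_forall fun _ => zero_le) ((eventually_gt_atTop 0).mono fun N hN => ?_)
  exact measure_le_iSup_abs_htDeviation_le hπ0 hπ1.le hN (y N) (hTmeas N) (hTindep N)
    (hTlaw N) (by positivity) hK (hmom N hN) hδK
end

section
/- For one-dimensional CDFs define the Lévy distance d_L(F₁,F₂) = inf{ ε > 0 : F₁(x−ε) − ε ≤ F₂(x) ≤ F₁(x+ε) + ε for all x ∈ ℝ }, and for bivariate CDFs define d_L(H₁,H₂) = inf{ ε > 0 : H₁(x−ε, y−ε) − ε ≤ H₂(x,y) ≤ H₁(x+ε, y+ε) + ε for all (x,y) ∈ ℝ² }. Let G₁, G₂, F₁, F₂ be CDFs of probability measures on ℝ and define the lower-Fréchet bivariate CDFs H_k(x,y) = max(G_k(x) + F_k(y) − 1, 0) for k = 1, 2. Then d_L(H₁, H₂) ≤ 2 ( d_L(G₁,G₂) + d_L(F₁,F₂) ). In particular, if Ĝ_N → G and F̂_N → F in Lévy distance, then the corresponding countermonotonic (lower-Fréchet) joint CDFs converge to max(G + F − 1, 0) in the bivariate Lévy distance, i.e., weakly. -/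
/-! If `ε` and `δ` witness the Lévy bounds between the `G`'s and between the `F`'s, then `ε + δ`
witnesses the bivariate bound between the lower Fréchet–Hoeffding CDFs: monotonicity of `G₁`, `F₁`
reduces the common shift `ε + δ` to the shifts `ε` and `δ`, and `t ↦ max (t - 1) 0` is monotone
and `1`-Lipschitz. Taking infima gives `d_L(H₁,H₂) ≤ d_L(G₁,G₂) + d_L(F₁,F₂)`, with nonemptiness
of the infimised sets coming from `ε = 1`, since CDFs take values in `[0,1]`. -/

open MeasureTheory Set Pointwise

noncomputable def cdfOf (μ : Measure ℝ) : ℝ → ℝ := fun x => (μ (Set.Iic x)).toReal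

noncomputable def levy1 (F₁ F₂ : ℝ → ℝ) : ℝ :=
  sInf {ε : ℝ | 0 < ε ∧ ∀ x, F₁ (x - ε) - ε ≤ F₂ x ∧ F₂ x ≤ F₁ (x + ε) + ε}

noncomputable def levy2 (H₁ H₂ : ℝ → ℝ → ℝ) : ℝ :=
  sInf {ε : ℝ | 0 < ε ∧ ∀ x y,
    H₁ (x - ε) (y - ε) - ε ≤ H₂ x y ∧ H₂ x y ≤ H₁ (x + ε) (y + ε) + ε}

lemma cdfOf_eq_cdf (μ : Measure ℝ) [IsProbabilityMeasure μ] :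
    cdfOf μ = ProbabilityTheory.cdf μ := by
  ext x
  rw [ProbabilityTheory.cdf_eq_real, measureReal_def, cdfOf]

lemma cdfOf_mem_Icc (μ : Measure ℝ) [IsProbabilityMeasure μ] (x : ℝ) :
    cdfOf μ x ∈ Icc (0 : ℝ) 1 := by
  rw [cdfOf_eq_cdf]
  exact ⟨ProbabilityTheory.cdf_nonneg μ x, ProbabilityTheory.cdf_le_one μ x⟩

lemma monotone_cdfOf (μ : Measure ℝ) [IsProbabilityMeasure μ] : Monotone (cdfOf μ) := by
  rw [cdfOf_eq_cdf]
  exact ProbabilityTheory.monotone_cdf μ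

def levy1Set (F₁ F₂ : ℝ → ℝ) : Set ℝ :=
  {ε : ℝ | 0 < ε ∧ ∀ x, F₁ (x - ε) - ε ≤ F₂ x ∧ F₂ x ≤ F₁ (x + ε) + ε}

def levy2Set (H₁ H₂ : ℝ → ℝ → ℝ) : Set ℝ :=
  {ε : ℝ | 0 < ε ∧ ∀ x y,
    H₁ (x - ε) (y - ε) - ε ≤ H₂ x y ∧ H₂ x y ≤ H₁ (x + ε) (y + ε) + ε}

def lowerFrechet (G F : ℝ → ℝ) : ℝ → ℝ → ℝ := fun x y => max (G x + F y - 1) 0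

lemma levy1_eq_sInf (F₁ F₂ : ℝ → ℝ) : levy1 F₁ F₂ = sInf (levy1Set F₁ F₂) := rfl

lemma levy2_eq_sInf (H₁ H₂ : ℝ → ℝ → ℝ) : levy2 H₁ H₂ = sInf (levy2Set H₁ H₂) := rfl

lemma bddBelow_levy1Set (F₁ F₂ : ℝ → ℝ) : BddBelow (levy1Set F₁ F₂) :=
  ⟨0, fun _ hε => hε.1.le⟩

lemma bddBelow_levy2Set (H₁ H₂ : ℝ → ℝ → ℝ) : BddBelow (levy2Set H₁ H₂) :=
  ⟨0, fun _ hε => hε.1.le⟩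

lemma levy1_nonneg (F₁ F₂ : ℝ → ℝ) : 0 ≤ levy1 F₁ F₂ :=
  Real.sInf_nonneg fun _ hε => hε.1.le

lemma levy2_nonneg (H₁ H₂ : ℝ → ℝ → ℝ) : 0 ≤ levy2 H₁ H₂ :=
  Real.sInf_nonneg fun _ hε => hε.1.le

lemma one_mem_levy1Set {F₁ F₂ : ℝ → ℝ} (h₁ : ∀ x, F₁ x ∈ Icc (0 : ℝ) 1)
    (h₂ : ∀ x, F₂ x ∈ Icc (0 : ℝ) 1) : (1 : ℝ) ∈ levy1Set F₁ F₂ := by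
  refine ⟨one_pos, fun x => ⟨?_, ?_⟩⟩
  · linarith [(h₁ (x - 1)).2, (h₂ x).1]
  · linarith [(h₂ x).2, (h₁ (x + 1)).1]

lemma add_mem_levy2Set_lowerFrechet {G₁ G₂ F₁ F₂ : ℝ → ℝ} (hG : Monotone G₁) (hF : Monotone F₁)
    {ε δ : ℝ} (hε : ε ∈ levy1Set G₁ G₂) (hδ : δ ∈ levy1Set F₁ F₂) :
    ε + δ ∈ levy2Set (lowerFrechet G₁ F₁) (lowerFrechet G₂ F₂) := by
  obtain ⟨hε_pos, hGε⟩ := hε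
  obtain ⟨hδ_pos, hFδ⟩ := hδ
  refine ⟨add_pos hε_pos hδ_pos, fun x y => ⟨?_, ?_⟩⟩
  · have hG' : G₁ (x - (ε + δ)) ≤ G₁ (x - ε) := hG (by linarith)
    have hF' : F₁ (y - (ε + δ)) ≤ F₁ (y - δ) := hF (by linarith)
    simp only [lowerFrechet, sub_le_iff_le_add, max_le_iff]
    constructor
    · linarith [le_max_left (G₂ x + F₂ y - 1) 0, (hGε x).1, (hFδ y).1]
    · linarith [le_max_right (G₂ x + F₂ y - 1) 0]
  · have hG' : G₁ (x + ε) ≤ G₁ (x + (ε + δ)) := hG (by linarith)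
    have hF' : F₁ (y + δ) ≤ F₁ (y + (ε + δ)) := hF (by linarith)
    simp only [lowerFrechet, max_le_iff]
    constructor
    · linarith [le_max_left (G₁ (x + (ε + δ)) + F₁ (y + (ε + δ)) - 1) 0, (hGε x).2, (hFδ y).2]
    · linarith [le_max_right (G₁ (x + (ε + δ)) + F₁ (y + (ε + δ)) - 1) 0]

lemma levy2_lowerFrechet_le {G₁ G₂ F₁ F₂ : ℝ → ℝ} (hG : Monotone G₁) (hF : Monotone F₁)
    (hGne : (levy1Set G₁ G₂).Nonempty) (hFne : (levy1Set F₁ F₂).Nonempty) :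
    levy2 (lowerFrechet G₁ F₁) (lowerFrechet G₂ F₂) ≤ levy1 G₁ G₂ + levy1 F₁ F₂ := by
  rw [levy2_eq_sInf, levy1_eq_sInf, levy1_eq_sInf,
    ← csInf_add hGne (bddBelow_levy1Set _ _) hFne (bddBelow_levy1Set _ _)]
  refine csInf_le_csInf (bddBelow_levy2Set _ _) (hGne.add hFne) ?_
  rintro _ ⟨ε, hε, δ, hδ, rfl⟩
  exact add_mem_levy2Set_lowerFrechet hG hF hε hδ

lemma levy2_lowerFrechet_cdfOf_le (μG₁ μG₂ μF₁ μF₂ : Measure ℝ)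
    [IsProbabilityMeasure μG₁] [IsProbabilityMeasure μG₂]
    [IsProbabilityMeasure μF₁] [IsProbabilityMeasure μF₂] :
    levy2 (lowerFrechet (cdfOf μG₁) (cdfOf μF₁)) (lowerFrechet (cdfOf μG₂) (cdfOf μF₂))
      ≤ levy1 (cdfOf μG₁) (cdfOf μG₂) + levy1 (cdfOf μF₁) (cdfOf μF₂) :=
  levy2_lowerFrechet_le (monotone_cdfOf μG₁) (monotone_cdfOf μF₁)
    ⟨1, one_mem_levy1Set (cdfOf_mem_Icc μG₁) (cdfOf_mem_Icc μG₂)⟩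
    ⟨1, one_mem_levy1Set (cdfOf_mem_Icc μF₁) (cdfOf_mem_Icc μF₂)⟩

/-- **Lévy-distance stability of the lower Fréchet–Hoeffding joint CDF.** For CDFs
`G₁, G₂, F₁, F₂` of probability measures on `ℝ`, the countermonotonic joint CDFs
`H_k(x,y) = max (G_k x + F_k y - 1) 0` satisfy
`d_L(H₁,H₂) ≤ 2 (d_L(G₁,G₂) + d_L(F₁,F₂))`. In particular, if `Ĝ_N → G` and `F̂_N → F` in
Lévy distance then `max (Ĝ_N + F̂_N - 1) 0 → max (G + F - 1) 0` in the bivariate Lévy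
distance. -/
theorem stmt_15 :
    (∀ (μG₁ μG₂ μF₁ μF₂ : Measure ℝ),
      IsProbabilityMeasure μG₁ → IsProbabilityMeasure μG₂ →
      IsProbabilityMeasure μF₁ → IsProbabilityMeasure μF₂ →
      levy2 (fun x y => max (cdfOf μG₁ x + cdfOf μF₁ y - 1) 0)
          (fun x y => max (cdfOf μG₂ x + cdfOf μF₂ y - 1) 0)
        ≤ 2 * (levy1 (cdfOf μG₁) (cdfOf μG₂) + levy1 (cdfOf μF₁) (cdfOf μF₂)))
    ∧ (∀ (μG μF : Measure ℝ) (μGs μFs : ℕ → Measure ℝ),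
      IsProbabilityMeasure μG → IsProbabilityMeasure μF →
      (∀ n, IsProbabilityMeasure (μGs n)) → (∀ n, IsProbabilityMeasure (μFs n)) →
      Filter.Tendsto (fun n => levy1 (cdfOf (μGs n)) (cdfOf μG)) Filter.atTop (nhds 0) →
      Filter.Tendsto (fun n => levy1 (cdfOf (μFs n)) (cdfOf μF)) Filter.atTop (nhds 0) →
      Filter.Tendsto
        (fun n => levy2 (fun x y => max (cdfOf (μGs n) x + cdfOf (μFs n) y - 1) 0)
          (fun x y => max (cdfOf μG x + cdfOf μF y - 1) 0))
        Filter.atTop (nhds 0)) := by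
  refine ⟨fun μG₁ μG₂ μF₁ μF₂ _ _ _ _ => ?_, fun μG μF μGs μFs _ _ _ _ hG hF => ?_⟩
  · change levy2 (lowerFrechet _ _) (lowerFrechet _ _) ≤ _
    linarith [levy2_lowerFrechet_cdfOf_le μG₁ μG₂ μF₁ μF₂,
      levy1_nonneg (cdfOf μG₁) (cdfOf μG₂), levy1_nonneg (cdfOf μF₁) (cdfOf μF₂)]
  · have hsum := hG.add hF
    rw [zero_add] at hsum
    exact squeeze_zero (fun n => levy2_nonneg _ _)
      (fun n => levy2_lowerFrechet_cdfOf_le (μGs n) μG (μFs n) μF) hsum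
end
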